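/- The coefficient of the linear monomial R_d in the k-th Kerov polynomial K_k equals the number of permutations τ ∈ S(k) with d−1 cycles such that τ⁻¹(1 2 ... k) is a single k-cycle. -/

import Mathlib

/-- The minimal number of transpositions needed to write `σ` as a product of
transpositions (`0` for the identity). -/
noncomputable def transLength {n : ℕ} (σ : Equiv.Perm (Fin n)) : ℕ :=
  sInf {h | ∃ L : List (Equiv.Perm (Fin n)), L.length = h ∧ (∀ x ∈ L, x.IsSwap) ∧ L.prod = σ}

/-- The setoid on `Fin n` whose classes are the orbits (cycles, including fixed
points) of the permutation `τ`. -/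
def cycleSetoid {n : ℕ} (τ : Equiv.Perm (Fin n)) : Setoid (Fin n) :=
  ⟨τ.SameCycle, ⟨fun x => Equiv.Perm.SameCycle.refl τ x, fun h => h.symm, fun h h' => h.trans h'⟩⟩

/-- The number of orbits of `{1,…,n}` under `τ` (fixed points count as cycles). -/
noncomputable def cycleCount {n : ℕ} (τ : Equiv.Perm (Fin n)) : ℕ :=
  Nat.card (Quotient (cycleSetoid τ))

open scoped Classical in
/-- The power series (specialized to `m` rectangles) associated to a bicolored
graph: white vertices `W`, black vertices `B`, active edges `S` going from
`src e` (white) to `tgt e` (black).  It is the sum, over admissible evaluations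
`ψ` (those with `ψ(black) ≥ ψ(white)` along every active edge), of
`∏ p_{ψ(w)} · ∏ q_{ψ(b)}`. -/
noncomputable def NGraph {W B E : Type} [Fintype W] [Fintype B] [Fintype E]
    (src : E → W) (tgt : E → B) (S : Finset E) {m : ℕ} (p q : Fin m → ℝ) : ℝ :=
  ∑ ψw : W → Fin m, ∑ ψb : B → Fin m,
    if ∀ e ∈ S, ψw (src e) ≤ ψb (tgt e) then
      (∏ w : W, p (ψw w)) * (∏ b : B, q (ψb b)) else 0

/-- The power series `N^{τ,τ̄}` of a pair of permutations: the one of its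
bicolored graph, whose white vertices are the cycles of `τ`, black vertices the
cycles of `τ̄`, with an edge for every `i ∈ {1,…,k}`. -/
noncomputable def Nperm {k : ℕ} (τ τb : Equiv.Perm (Fin k)) {m : ℕ} (p q : Fin m → ℝ) : ℝ :=
  letI : Fintype (Quotient (cycleSetoid τ)) := Fintype.ofFinite _
  letI : Fintype (Quotient (cycleSetoid τb)) := Fintype.ofFinite _
  NGraph (fun i : Fin k => Quotient.mk (cycleSetoid τ) i)
    (fun i : Fin k => Quotient.mk (cycleSetoid τb) i) Finset.univ p q

/-- Stanley's formula for the normalized character `Σ_k` on a `k`-cycle, as a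
power series in the multirectangular coordinates `p,q`:
`Σ_k = ∑_{τ τ̄ = (1…k)} (-1)^{|C(τ)|+1} N^{τ,τ̄}`. -/
noncomputable def SigmaStanley (k : ℕ) {m : ℕ} (p q : Fin m → ℝ) : ℝ :=
  ∑ τ : Equiv.Perm (Fin k),
    (-1 : ℝ) ^ (cycleCount τ + 1) * Nperm τ (τ⁻¹ * finRotate k) p q

/-- The free cumulant `R_j` as a power series in the multirectangular
coordinates `p,q`: the graded degree `j` part of `Σ_{j-1}`, i.e. the part of
Stanley's formula coming from minimal factorizations:
`R_{l+1} = ∑_{τ τ̄ = (1…l), |C(τ)|+|C(τ̄)| = l+1} (-1)^{|C(τ)|+1} N^{τ,τ̄}`. -/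
noncomputable def Rcum (j : ℕ) {m : ℕ} (p q : Fin m → ℝ) : ℝ :=
  ∑ τ : Equiv.Perm (Fin (j - 1)),
    if cycleCount τ + cycleCount (τ⁻¹ * finRotate (j - 1)) = j then
      (-1 : ℝ) ^ (cycleCount τ + 1) * Nperm τ (τ⁻¹ * finRotate (j - 1)) p q else 0

-- ## auxiliary lemmas

section Aux
open MvPolynomial

lemma cycleCount_one (n : ℕ) : cycleCount (1 : Equiv.Perm (Fin n)) = n := by
  have hb : Function.Bijective (Quotient.mk (cycleSetoid (1 : Equiv.Perm (Fin n)))) := by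
    constructor
    · intro x y h
      have := Quotient.exact h
      exact (Equiv.Perm.sameCycle_one (x := x) (y := y)).mp this
    · intro q; exact q.exists_rep
  rw [cycleCount, ← Nat.card_eq_of_bijective _ hb, Nat.card_eq_fintype_card, Fintype.card_fin]

lemma eq_one_of_cycleCount {n : ℕ} (τ : Equiv.Perm (Fin n)) (h : cycleCount τ = n) : τ = 1 := by
  classical
  by_contra hne
  obtain ⟨x, hx⟩ : ∃ x, τ x ≠ x := by
    by_contra hall
    push_neg at hall
    exact hne (Equiv.ext fun x => by simp [hall x])
  have h2 : (cycleSetoid τ).r x (τ x) := ⟨1, by simp⟩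
  have h1 : x ≠ τ x := fun e => hx e.symm
  have : Fintype.card (Quotient (cycleSetoid τ)) < Fintype.card (Fin n) :=
    Fintype.card_lt_of_surjective_not_injective (Quotient.mk (cycleSetoid τ)) Quotient.mk_surjective
      (fun hinj => h1 (hinj (Quotient.sound h2)))
  rw [Fintype.card_fin] at this
  rw [cycleCount, Nat.card_eq_fintype_card] at h
  omega

lemma cycleCount_finRotate {n : ℕ} (hn : 1 ≤ n) : cycleCount (finRotate n) = 1 := by
  rw [cycleCount, Nat.card_eq_one_iff_unique]
  constructor
  · constructor
    intro a b
    induction a using Quotient.ind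
    induction b using Quotient.ind
    rename_i x y
    apply Quotient.sound
    rcases Nat.lt_or_ge n 2 with h2 | h2
    · interval_cases n
      have : x = y := Subsingleton.elim x y
      rw [this]
    · have hc := isCycle_finRotate_of_le h2
      have hs := support_finRotate_of_le h2
      have hx : finRotate n x ≠ x := by
        have : x ∈ (finRotate n).support := by rw [hs]; exact Finset.mem_univ x
        exact Equiv.Perm.mem_support.mp this
      have hy : finRotate n y ≠ y := by
        have : y ∈ (finRotate n).support := by rw [hs]; exact Finset.mem_univ y
        exact Equiv.Perm.mem_support.mp this
      exact hc.sameCycle hx hy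
  · exact ⟨⟦⟨0, hn⟩⟧⟩

lemma cycleCount_pos {n : ℕ} (hn : 1 ≤ n) (τ : Equiv.Perm (Fin n)) : 1 ≤ cycleCount τ := by
  have : Nonempty (Quotient (cycleSetoid τ)) := ⟨⟦⟨0, hn⟩⟧⟩
  exact Nat.card_pos

lemma sum_subsingleton' {α : Type} {M : Type*} [AddCommMonoid M] [Subsingleton α]
    (inst : Fintype α) (f : α → M) (a : α) : @Finset.sum α M _ (@Finset.univ α inst) f = f a := by
  have : (@Finset.univ α inst) = {a} := by
    ext x; simp [Subsingleton.elim x a]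
  rw [this, Finset.sum_singleton]

lemma NGraph_one {W B E : Type} [Fintype W] [Fintype B] [Fintype E]
    (src : E → W) (tgt : E → B) (A Bv : ℝ) :
    NGraph src tgt Finset.univ (fun _ : Fin 1 => A) (fun _ : Fin 1 => Bv)
      = A ^ Fintype.card W * Bv ^ Fintype.card B := by
  rw [NGraph]
  rw [sum_subsingleton' _ _ (fun _ => (0:Fin 1)), sum_subsingleton' _ _ (fun _ => (0:Fin 1))]
  rw [if_pos]
  · simp [Finset.prod_const, Finset.card_univ]
  · intro e _
    exact le_of_eq (Subsingleton.elim _ _)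

lemma Nperm_one {n : ℕ} (τ τb : Equiv.Perm (Fin n)) (A B : ℝ) :
    Nperm τ τb (fun _ : Fin 1 => A) (fun _ : Fin 1 => B)
      = A ^ cycleCount τ * B ^ cycleCount τb := by
  rw [Nperm]
  letI : Fintype (Quotient (cycleSetoid τ)) := Fintype.ofFinite _
  letI : Fintype (Quotient (cycleSetoid τb)) := Fintype.ofFinite _
  rw [NGraph_one]
  rw [cycleCount, cycleCount, Nat.card_eq_fintype_card, Nat.card_eq_fintype_card]

/-- the one-rectangle specialization of `Rcum (n+1)`-ish, as a 2-variable polynomial;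
`PR n j` mirrors the sum in `Rcum j` with `n = j - 1`. -/
noncomputable def PR (n j : ℕ) : MvPolynomial (Fin 2) ℝ :=
  ∑ τ : Equiv.Perm (Fin n),
    if cycleCount τ + cycleCount (τ⁻¹ * finRotate n) = j then
      C ((-1:ℝ)^(cycleCount τ + 1)) * X 0 ^ cycleCount τ *
        X 1 ^ cycleCount (τ⁻¹ * finRotate n)
    else 0

/-- the one-rectangle specialization of `SigmaStanley k` as a 2-variable polynomial. -/
noncomputable def PS (k : ℕ) : MvPolynomial (Fin 2) ℝ :=
  ∑ τ : Equiv.Perm (Fin k),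
    C ((-1:ℝ)^(cycleCount τ + 1)) * X 0 ^ cycleCount τ *
      X 1 ^ cycleCount (τ⁻¹ * finRotate k)

lemma eval_PS (k : ℕ) (x : Fin 2 → ℝ) :
    eval x (PS k) = SigmaStanley k (fun _ : Fin 1 => x 0) (fun _ : Fin 1 => x 1) := by
  rw [PS, SigmaStanley, map_sum]
  refine Finset.sum_congr rfl fun τ _ => ?_
  simp [Nperm_one, mul_assoc]

lemma eval_PR (j : ℕ) (x : Fin 2 → ℝ) :
    eval x (PR (j - 1) j) = Rcum j (fun _ : Fin 1 => x 0) (fun _ : Fin 1 => x 1) := by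
  rw [PR, Rcum, map_sum]
  refine Finset.sum_congr rfl fun τ _ => ?_
  split
  · simp [Nperm_one, mul_assoc]
  · simp

lemma mono_eq_iff (a b c e : ℕ) : (Finsupp.single (0:Fin 2) a + Finsupp.single 1 b
    = Finsupp.single (0:Fin 2) c + Finsupp.single 1 e) ↔ a = c ∧ b = e := by
  constructor
  · intro h
    refine ⟨?_, ?_⟩
    · have := DFunLike.congr_fun h 0; simpa [Finsupp.single_apply] using this
    · have := DFunLike.congr_fun h 1; simpa [Finsupp.single_apply] using this
  · rintro ⟨rfl, rfl⟩; rfl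

lemma coeff_term (c : ℝ) (a b : ℕ) (μ : Fin 2 →₀ ℕ) :
    MvPolynomial.coeff μ (C c * X 0 ^ a * X 1 ^ b : MvPolynomial (Fin 2) ℝ)
      = if Finsupp.single 0 a + Finsupp.single 1 b = μ then c else 0 := by
  rw [X_pow_eq_monomial, X_pow_eq_monomial, C_mul_monomial, monomial_mul, coeff_monomial]
  simp

lemma X1_dvd_PR (n j : ℕ) (hn : 1 ≤ n) : (X 1 : MvPolynomial (Fin 2) ℝ) ∣ PR n j := by
  apply Finset.dvd_sum
  intro τ _
  split
  · exact Dvd.dvd.mul_left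
      (dvd_pow_self _ (by have := cycleCount_pos hn (τ⁻¹ * finRotate n); omega)) _
  · exact dvd_zero _

lemma coeff_of_sq (g : MvPolynomial (Fin 2) ℝ) (h : (X 1 : MvPolynomial (Fin 2) ℝ)^2 ∣ g)
    (a : ℕ) : MvPolynomial.coeff (Finsupp.single 0 a + Finsupp.single 1 1) g = 0 := by
  classical
  obtain ⟨f, rfl⟩ := h
  rw [pow_two, mul_assoc, coeff_X_mul', if_pos, coeff_X_mul', if_neg]
  · rw [Finsupp.mem_support_iff]
    simp [Finsupp.sub_apply, Finsupp.single_apply]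
  · rw [Finsupp.mem_support_iff]
    simp [Finsupp.single_apply]

lemma finsupp_sum_eq_one {k : ℕ} (a : Fin k →₀ ℕ) (h : ∑ v ∈ a.support, a v = 1) :
    ∃ v, a = Finsupp.single v 1 := by
  classical
  obtain ⟨v, hv, hv1⟩ : ∃ v ∈ a.support, a v ≠ 0 := by
    by_contra hc
    push_neg at hc
    rw [Finset.sum_eq_zero (fun i hi => hc i hi)] at h
    omega
  refine ⟨v, ?_⟩
  have hrest : ∑ w ∈ a.support.erase v, a w = 0 := by
    have := Finset.add_sum_erase a.support a hv
    omega
  ext w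
  rcases eq_or_ne w v with rfl | hw
  · have := Finset.add_sum_erase a.support a hv
    simp only [Finsupp.single_apply, if_pos rfl]
    simp only [if_true, eq_self_iff_true]
    omega
  · simp only [Finsupp.single_apply, if_neg (Ne.symm hw)]
    by_contra hne
    have hwmem : w ∈ a.support.erase v := Finset.mem_erase.mpr ⟨hw, Finsupp.mem_support_iff.mpr hne⟩
    have := Finset.sum_eq_zero_iff.mp hrest w hwmem
    exact hne this

end Aux

section Main
open MvPolynomial

lemma coeff_PS (k d : ℕ) (hd : 2 ≤ d) :
    MvPolynomial.coeff (Finsupp.single (0:Fin 2) (d-1) + Finsupp.single 1 1) (PS k)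
      = (-1:ℝ)^d * ((Finset.univ.filter (fun τ : Equiv.Perm (Fin k) =>
          cycleCount τ = d - 1 ∧ cycleCount (τ⁻¹ * finRotate k) = 1)).card : ℝ) := by
  rw [PS, MvPolynomial.coeff_sum]
  have key : ∀ τ : Equiv.Perm (Fin k),
      MvPolynomial.coeff (Finsupp.single (0:Fin 2) (d-1) + Finsupp.single 1 1)
        (C ((-1:ℝ)^(cycleCount τ + 1)) * X 0 ^ cycleCount τ *
          X 1 ^ cycleCount (τ⁻¹ * finRotate k))
      = if (cycleCount τ = d - 1 ∧ cycleCount (τ⁻¹ * finRotate k) = 1) then ((-1:ℝ)^d) else 0 := by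
    intro τ
    rw [coeff_term, if_congr (mono_eq_iff _ _ _ _) rfl rfl]
    split
    · rename_i hh; rw [hh.1]; congr 1; omega
    · rfl
  rw [Finset.sum_congr rfl (fun τ _ => key τ)]
  rw [← Finset.sum_filter, Finset.sum_const, nsmul_eq_mul, mul_comm]

lemma coeff_PR (vn d : ℕ) (hd : 2 ≤ d) :
    MvPolynomial.coeff (Finsupp.single (0:Fin 2) (d-1) + Finsupp.single 1 1) (PR (vn+1) (vn+2))
      = if vn = d - 2 then (-1:ℝ)^d else 0 := by
  rw [PR, MvPolynomial.coeff_sum]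
  have key : ∀ τ : Equiv.Perm (Fin (vn+1)),
      MvPolynomial.coeff (Finsupp.single (0:Fin 2) (d-1) + Finsupp.single 1 1)
        (if cycleCount τ + cycleCount (τ⁻¹ * finRotate (vn+1)) = vn+2 then
          C ((-1:ℝ)^(cycleCount τ + 1)) * X 0 ^ cycleCount τ *
            X 1 ^ cycleCount (τ⁻¹ * finRotate (vn+1)) else 0)
      = if τ = 1 ∧ vn = d - 2 then (-1:ℝ)^d else 0 := by
    intro τ
    rw [apply_ite (MvPolynomial.coeff (Finsupp.single (0:Fin 2) (d-1) + Finsupp.single 1 1)),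
        MvPolynomial.coeff_zero, coeff_term,
        if_congr (Iff.rfl) (if_congr (mono_eq_iff _ _ _ _) rfl rfl) rfl]
    by_cases h1 : cycleCount τ + cycleCount (τ⁻¹ * finRotate (vn+1)) = vn+2
    · rw [if_pos h1]
      by_cases h2 : cycleCount τ = d - 1 ∧ cycleCount (τ⁻¹ * finRotate (vn+1)) = 1
      · have hτ : τ = 1 := eq_one_of_cycleCount τ (by omega)
        have hv : vn = d - 2 := by omega
        rw [if_pos h2, if_pos ⟨hτ, hv⟩, h2.1]
        congr 1
        omega
      · rw [if_neg h2, if_neg ?_]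
        rintro ⟨rfl, hv⟩
        apply h2
        constructor
        · rw [cycleCount_one]; omega
        · simpa using cycleCount_finRotate (n := vn+1) (by omega)
    · rw [if_neg h1, if_neg ?_]
      rintro ⟨rfl, hv⟩
      apply h1
      rw [cycleCount_one]
      have h3 : cycleCount ((1:Equiv.Perm (Fin (vn+1)))⁻¹ * finRotate (vn+1)) = 1 := by
        simpa using cycleCount_finRotate (n := vn+1) (by omega)
      omega
  rw [Finset.sum_congr rfl (fun τ _ => key τ)]
  rcases eq_or_ne vn (d-2) with h | h
  · simp [h]
  · simp [h]

end Main


/-- in the `k`-th Kerov polynomial `K_k` (the polynomial in the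
variables `R_2, …, R_{k+1}` — here indexed by `Fin k`, the variable `v`
standing for `R_{v+2}` — expressing `Σ_k`), the coefficient of the linear
monomial `R_d` is the number of permutations `τ ∈ S(k)` with `d - 1` cycles
such that `τ⁻¹ (1 2 … k)` is a single `k`-cycle. -/
theorem kerov_linear_coefficient (k d : ℕ) (hd : 2 ≤ d) (hdk : d ≤ k + 1)
    (K : MvPolynomial (Fin k) ℝ)
    (hK : ∀ (m : ℕ) (p q : Fin m → ℝ),
      SigmaStanley k p q = MvPolynomial.eval (fun v : Fin k => Rcum (v.1 + 2) p q) K) :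
    K.coeff (Finsupp.single (⟨d - 2, by omega⟩ : Fin k) 1) =
      (Nat.card {τ : Equiv.Perm (Fin k) //
        cycleCount τ = d - 1 ∧ cycleCount (τ⁻¹ * finRotate k) = 1} : ℝ) := by
  classical
  have hμne : (Finsupp.single (0:Fin 2) (d-1) + Finsupp.single 1 1) ≠ 0 := by
    intro h
    have := DFunLike.congr_fun h 1
    simp [Finsupp.single_apply] at this
  have hPSQ : PS k = MvPolynomial.eval₂ MvPolynomial.C
      (fun v : Fin k => PR (v.1+1) (v.1+2)) K := by
    apply MvPolynomial.funext
    intro x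
    have e1 : MvPolynomial.eval x (MvPolynomial.eval₂ MvPolynomial.C
          (fun v : Fin k => PR (v.1+1) (v.1+2)) K)
        = MvPolynomial.eval
            (fun v : Fin k => MvPolynomial.eval x (PR (v.1+1) (v.1+2))) K := by
      rw [MvPolynomial.eval₂_comp_left (MvPolynomial.eval x)]
      have h0 : (MvPolynomial.eval x).comp (MvPolynomial.C (σ := Fin 2)) = RingHom.id ℝ := by
        ext r; simp
      rw [h0]
      rfl
    have hfun : (fun v : Fin k => Rcum (v.1+2) (fun _ : Fin 1 => x 0) (fun _ : Fin 1 => x 1))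
        = fun v : Fin k => MvPolynomial.eval x (PR (v.1+1) (v.1+2)) := by
      funext v
      have h2 := eval_PR (v.1 + 2) x
      have h3 : v.1 + 2 - 1 = v.1 + 1 := by omega
      rw [h3] at h2
      exact h2.symm
    rw [eval_PS, hK 1 (fun _ => x 0) (fun _ => x 1), hfun, e1]
  -- coefficient of μ in the composed polynomial
  have hterm : ∀ a : Fin k →₀ ℕ,
      MvPolynomial.coeff (Finsupp.single (0:Fin 2) (d-1) + Finsupp.single 1 1)
        (MvPolynomial.C (K.coeff a) * ∏ i ∈ a.support, PR (i.1+1) (i.1+2) ^ a i)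
      = if a = Finsupp.single (⟨d - 2, by omega⟩ : Fin k) 1
          then K.coeff a * (-1:ℝ)^d else 0 := by
    intro a
    rw [MvPolynomial.coeff_C_mul]
    by_cases h2 : 2 ≤ ∑ i ∈ a.support, a i
    · have hdvd : (MvPolynomial.X 1 : MvPolynomial (Fin 2) ℝ)^2
          ∣ ∏ i ∈ a.support, PR (i.1+1) (i.1+2) ^ a i := by
        have h1 : (MvPolynomial.X 1 : MvPolynomial (Fin 2) ℝ)^(∑ i ∈ a.support, a i)
            ∣ ∏ i ∈ a.support, PR (i.1+1) (i.1+2) ^ a i := by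
          rw [← Finset.prod_pow_eq_pow_sum]
          exact Finset.prod_dvd_prod_of_dvd _ _ fun i _ =>
            pow_dvd_pow_of_dvd (X1_dvd_PR (i.1+1) (i.1+2) (by omega)) _
        exact dvd_trans (pow_dvd_pow _ h2) h1
      rw [coeff_of_sq _ hdvd, if_neg ?_, mul_zero]
      intro hae
      rw [hae] at h2
      rw [Finsupp.support_single_ne_zero _ one_ne_zero, Finset.sum_singleton,
        Finsupp.single_eq_same] at h2
      omega
    · have hS : (∑ i ∈ a.support, a i) = 0 ∨ (∑ i ∈ a.support, a i) = 1 := by omega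
      rcases hS with h0 | h1
      · have ha : a = 0 := by
          ext i
          simp only [Finsupp.coe_zero, Pi.zero_apply]
          by_contra hne
          have hi : i ∈ a.support := Finsupp.mem_support_iff.mpr hne
          exact hne (Finset.sum_eq_zero_iff.mp h0 i hi)
        rw [ha, if_neg ?_]
        · rw [Finsupp.support_zero, Finset.prod_empty, MvPolynomial.coeff_one,
            if_neg (Ne.symm hμne), mul_zero]
        · intro h
          have := DFunLike.congr_fun h (⟨d - 2, by omega⟩ : Fin k)
          simp [Finsupp.single_apply] at this
      · obtain ⟨v, rfl⟩ := finsupp_sum_eq_one a h1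
        have hprod : (∏ i ∈ (Finsupp.single v 1).support, PR (i.1+1) (i.1+2)
              ^ (Finsupp.single v 1) i) = PR (v.1+1) (v.1+2) := by
          rw [Finsupp.support_single_ne_zero _ one_ne_zero, Finset.prod_singleton,
            Finsupp.single_eq_same, pow_one]
        rw [hprod, coeff_PR v.1 d hd, mul_ite, mul_zero]
        have hiff : (v.1 = d - 2) ↔
            (Finsupp.single v 1 = Finsupp.single (⟨d - 2, by omega⟩ : Fin k) 1) := by
          rw [Finsupp.single_left_inj one_ne_zero]
          constructor
          · intro h; exact Fin.ext h
          · intro h; rw [h]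
        exact if_congr hiff rfl rfl
  have hQc : MvPolynomial.coeff (Finsupp.single (0:Fin 2) (d-1) + Finsupp.single 1 1)
        (MvPolynomial.eval₂ MvPolynomial.C (fun v : Fin k => PR (v.1+1) (v.1+2)) K)
      = K.coeff (Finsupp.single (⟨d - 2, by omega⟩ : Fin k) 1) * (-1:ℝ)^d := by
    rw [MvPolynomial.eval₂_eq, MvPolynomial.coeff_sum]
    rw [Finset.sum_congr rfl (fun a _ => hterm a)]
    rw [Finset.sum_ite_eq' K.support (Finsupp.single (⟨d - 2, by omega⟩ : Fin k) 1)
      (fun a => K.coeff a * (-1:ℝ)^d)]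
    split
    · rfl
    · rename_i hmem
      rw [MvPolynomial.notMem_support_iff.mp hmem]
      ring
  have hc := congrArg (MvPolynomial.coeff
    (Finsupp.single (0:Fin 2) (d-1) + Finsupp.single 1 1)) hPSQ
  rw [coeff_PS k d hd, hQc] at hc
  have hcard : (Nat.card {τ : Equiv.Perm (Fin k) //
        cycleCount τ = d - 1 ∧ cycleCount (τ⁻¹ * finRotate k) = 1})
      = (Finset.univ.filter (fun τ : Equiv.Perm (Fin k) =>
          cycleCount τ = d - 1 ∧ cycleCount (τ⁻¹ * finRotate k) = 1)).card := by
    rw [Nat.card_eq_fintype_card, Fintype.card_subtype]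
  rw [hcard]
  have hne : ((-1:ℝ)^d) ≠ 0 := pow_ne_zero _ (by norm_num)
  apply mul_right_cancel₀ hne
  linear_combination -hc
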